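/- arXiv:2604.03934 — 8 statements merged into one kernel-verified Lean document; each statement's English description precedes it below -/
import Mathlib

section
/- Let Λ be a set, F a field, and K, Q : Λ² → F determinantally equivalent functions. Then for every 3-cycle p = (p₀,p₁,p₂,p₀) in Λ with distinct vertices, K[p] + K'[p] = Q[p] + Q'[p], where for a function h we write h[p] = h(p₀,p₁)h(p₁,p₂)h(p₂,p₀) and h'[p] = h(p₁,p₀)h(p₂,p₁)h(p₀,p₂). -/
def DetEquiv {Λ F : Type*} [Field F] (K Q : Λ → Λ → F) : Prop :=
  ∀ (n : ℕ) (x : Fin n → Λ),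
    Matrix.det (Matrix.of fun i j => K (x i) (x j)) =
    Matrix.det (Matrix.of fun i j => Q (x i) (x j))

def ClassD {Λ F : Type*} [Field F] (h : Λ → Λ → F) : Prop :=
  ∀ x y z w : Λ, x ≠ y → x ≠ z → x ≠ w → y ≠ z → y ≠ w → z ≠ w →
    h x y * h w z - h x z * h w y ≠ 0

theorem stmt1 {Λ F : Type*} [Field F] (K Q : Λ → Λ → F) (hKQ : DetEquiv K Q)
    (p₀ p₁ p₂ : Λ) (h01 : p₀ ≠ p₁) (h02 : p₀ ≠ p₂) (h12 : p₁ ≠ p₂) :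
    K p₀ p₁ * K p₁ p₂ * K p₂ p₀ + K p₁ p₀ * K p₂ p₁ * K p₀ p₂ =
      Q p₀ p₁ * Q p₁ p₂ * Q p₂ p₀ + Q p₁ p₀ * Q p₂ p₁ * Q p₀ p₂ := by
  have e0 := hKQ 1 ![p₀]
  have e1 := hKQ 1 ![p₁]
  have e2 := hKQ 1 ![p₂]
  have d01 := hKQ 2 ![p₀, p₁]
  have d02 := hKQ 2 ![p₀, p₂]
  have d12 := hKQ 2 ![p₁, p₂]
  have d3 := hKQ 3 ![p₀, p₁, p₂]
  simp [Matrix.det_fin_one, Matrix.det_fin_two, Matrix.det_fin_three,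
    Matrix.of_apply] at e0 e1 e2 d01 d02 d12 d3
  simp only [e0, e1, e2] at d01 d02 d12 d3
  linear_combination d3 - Q p₀ p₀ * d12 - Q p₂ p₂ * d01 - Q p₁ p₁ * d02
end

section
/- Let Λ be a set, F a field, and K, Q : Λ² → F determinantally equivalent functions. Then every 3-cycle p = (p₀,p₁,p₂,p₀) in Λ with distinct vertices satisfies either (K[p] = Q[p] and K'[p] = Q'[p]) or (K[p] = Q'[p] and K'[p] = Q[p]). -/
theorem stmt2 {Λ F : Type*} [Field F] (K Q : Λ → Λ → F) (hKQ : DetEquiv K Q)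
    (p₀ p₁ p₂ : Λ) (h01 : p₀ ≠ p₁) (h02 : p₀ ≠ p₂) (h12 : p₁ ≠ p₂) :
    (K p₀ p₁ * K p₁ p₂ * K p₂ p₀ = Q p₀ p₁ * Q p₁ p₂ * Q p₂ p₀ ∧
      K p₁ p₀ * K p₂ p₁ * K p₀ p₂ = Q p₁ p₀ * Q p₂ p₁ * Q p₀ p₂) ∨
    (K p₀ p₁ * K p₁ p₂ * K p₂ p₀ = Q p₁ p₀ * Q p₂ p₁ * Q p₀ p₂ ∧
      K p₁ p₀ * K p₂ p₁ * K p₀ p₂ = Q p₀ p₁ * Q p₁ p₂ * Q p₂ p₀) := by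
  have d0 := hKQ 1 ![p₀]
  have d1 := hKQ 1 ![p₁]
  have d2 := hKQ 1 ![p₂]
  simp [Matrix.det_fin_one] at d0 d1 d2
  have e01 := hKQ 2 ![p₀, p₁]
  have e02 := hKQ 2 ![p₀, p₂]
  have e12 := hKQ 2 ![p₁, p₂]
  simp [Matrix.det_fin_two] at e01 e02 e12
  have E01 : K p₀ p₁ * K p₁ p₀ = Q p₀ p₁ * Q p₁ p₀ := by
    linear_combination d1 * Q p₀ p₀ + d0 * K p₁ p₁ - e01
  have E02 : K p₀ p₂ * K p₂ p₀ = Q p₀ p₂ * Q p₂ p₀ := by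
    linear_combination d2 * Q p₀ p₀ + d0 * K p₂ p₂ - e02
  have E12 : K p₁ p₂ * K p₂ p₁ = Q p₁ p₂ * Q p₂ p₁ := by
    linear_combination d2 * Q p₁ p₁ + d1 * K p₂ p₂ - e12
  have t3 := hKQ 3 ![p₀, p₁, p₂]
  simp [Matrix.det_fin_three] at t3
  have hsum : K p₀ p₁ * K p₁ p₂ * K p₂ p₀ + K p₁ p₀ * K p₂ p₁ * K p₀ p₂ =
      Q p₀ p₁ * Q p₁ p₂ * Q p₂ p₀ + Q p₁ p₀ * Q p₂ p₁ * Q p₀ p₂ := by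
    linear_combination t3 - d0 * (K p₁ p₁ * K p₂ p₂) - Q p₀ p₀ * d1 * K p₂ p₂
      - Q p₀ p₀ * Q p₁ p₁ * d2 + d0 * (K p₁ p₂ * K p₂ p₁) + Q p₀ p₀ * E12
      + E01 * K p₂ p₂ + Q p₀ p₁ * Q p₁ p₀ * d2 + E02 * K p₁ p₁ + Q p₀ p₂ * Q p₂ p₀ * d1
  have hprod : (K p₀ p₁ * K p₁ p₂ * K p₂ p₀) * (K p₁ p₀ * K p₂ p₁ * K p₀ p₂) =
      (Q p₀ p₁ * Q p₁ p₂ * Q p₂ p₀) * (Q p₁ p₀ * Q p₂ p₁ * Q p₀ p₂) := by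
    linear_combination (K p₁ p₂ * K p₂ p₁ * (K p₀ p₂ * K p₂ p₀)) * E01
      + (Q p₀ p₁ * Q p₁ p₀ * (K p₀ p₂ * K p₂ p₀)) * E12
      + (Q p₀ p₁ * Q p₁ p₀ * (Q p₁ p₂ * Q p₂ p₁)) * E02
  set x := K p₀ p₁ * K p₁ p₂ * K p₂ p₀
  set y := K p₁ p₀ * K p₂ p₁ * K p₀ p₂
  set u := Q p₀ p₁ * Q p₁ p₂ * Q p₂ p₀
  set v := Q p₁ p₀ * Q p₂ p₁ * Q p₀ p₂
  have key : (x - u) * (x - v) = 0 := by linear_combination x * hsum - hprod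
  rcases mul_eq_zero.mp key with h | h
  · left
    have hx : x = u := sub_eq_zero.mp h
    exact ⟨hx, by linear_combination hsum - hx⟩
  · right
    have hx : x = v := sub_eq_zero.mp h
    exact ⟨hx, by linear_combination hsum - hx⟩
end

section
/- Let Λ be a set, F a field, and K, Q : Λ² → F determinantally equivalent. For a 3-cycle p = (p₀,p₁,p₂,p₀) of distinct vertices, the following are equivalent: (1) both K[p] = Q[p] and K[p] = Q'[p] hold; (2) K[p] = K'[p]; (3) Q[p] = Q'[p]. -/
lemma quad_key {F : Type*} [Field F] (a a' b b' : F)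
    (hs : a + a' = b + b') (hp : a * a' = b * b') :
    ((a = b ∧ a = b') ↔ a = a') ∧ (a = a' ↔ b = b') := by
  have hab : a = b ∨ a = b' := by
    have : (a - b) * (a - b') = 0 := by linear_combination a * hs - hp
    rcases mul_eq_zero.1 this with h | h
    · exact Or.inl (by linear_combination h)
    · exact Or.inr (by linear_combination h)
  have hba : b = a ∨ b = a' := by
    have : (b - a) * (b - a') = 0 := by linear_combination -b * hs + hp
    rcases mul_eq_zero.1 this with h | h
    · exact Or.inl (by linear_combination h)
    · exact Or.inr (by linear_combination h)
  constructor
  · constructor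
    · rintro ⟨h1, h2⟩; linear_combination -hs + h1 + h2
    · intro h
      rcases hab with h1 | h1
      · exact ⟨h1, by linear_combination hs + h - h1⟩
      · exact ⟨by linear_combination hs + h - h1, h1⟩
  · constructor
    · intro h
      rcases hab with h1 | h1
      · linear_combination hs + h - 2 * h1
      · linear_combination -hs - h + 2 * h1
    · intro h
      rcases hba with h1 | h1
      · linear_combination -hs + h - 2 * h1
      · linear_combination hs - h + 2 * h1

theorem stmt3 {Λ F : Type*} [Field F] (K Q : Λ → Λ → F) (hKQ : DetEquiv K Q)
    (p₀ p₁ p₂ : Λ) (h01 : p₀ ≠ p₁) (h02 : p₀ ≠ p₂) (h12 : p₁ ≠ p₂) :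
    ((K p₀ p₁ * K p₁ p₂ * K p₂ p₀ = Q p₀ p₁ * Q p₁ p₂ * Q p₂ p₀ ∧
        K p₀ p₁ * K p₁ p₂ * K p₂ p₀ = Q p₁ p₀ * Q p₂ p₁ * Q p₀ p₂) ↔
      K p₀ p₁ * K p₁ p₂ * K p₂ p₀ = K p₁ p₀ * K p₂ p₁ * K p₀ p₂) ∧
    (K p₀ p₁ * K p₁ p₂ * K p₂ p₀ = K p₁ p₀ * K p₂ p₁ * K p₀ p₂ ↔
      Q p₀ p₁ * Q p₁ p₂ * Q p₂ p₀ = Q p₁ p₀ * Q p₂ p₁ * Q p₀ p₂) := by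
  have h1 : ∀ x : Λ, K x x = Q x x := by
    intro x
    have := hKQ 1 ![x]
    simpa [Matrix.det_fin_one] using this
  have h2 : ∀ x y : Λ, K x y * K y x = Q x y * Q y x := by
    intro x y
    have h := hKQ 2 ![x, y]
    simp [Matrix.det_fin_two] at h
    linear_combination -h + K y y * h1 x + Q x x * h1 y
  have h3 := hKQ 3 ![p₀, p₁, p₂]
  simp [Matrix.det_fin_three] at h3
  have hsum : K p₀ p₁ * K p₁ p₂ * K p₂ p₀ + K p₁ p₀ * K p₂ p₁ * K p₀ p₂ =
      Q p₀ p₁ * Q p₁ p₂ * Q p₂ p₀ + Q p₁ p₀ * Q p₂ p₁ * Q p₀ p₂ := by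
    linear_combination h3 - (K p₁ p₁ * K p₂ p₂) * h1 p₀ - (Q p₀ p₀ * K p₂ p₂) * h1 p₁
      - (Q p₀ p₀ * Q p₁ p₁) * h1 p₂ + K p₀ p₀ * h2 p₁ p₂ + (Q p₁ p₂ * Q p₂ p₁) * h1 p₀
      + K p₂ p₂ * h2 p₀ p₁ + (Q p₀ p₁ * Q p₁ p₀) * h1 p₂
      + K p₁ p₁ * h2 p₀ p₂ + (Q p₀ p₂ * Q p₂ p₀) * h1 p₁
  have hprod : (K p₀ p₁ * K p₁ p₂ * K p₂ p₀) * (K p₁ p₀ * K p₂ p₁ * K p₀ p₂) =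
      (Q p₀ p₁ * Q p₁ p₂ * Q p₂ p₀) * (Q p₁ p₀ * Q p₂ p₁ * Q p₀ p₂) := by
    linear_combination (K p₁ p₂ * K p₂ p₁ * K p₀ p₂ * K p₂ p₀) * h2 p₀ p₁
      + (Q p₀ p₁ * Q p₁ p₀ * K p₀ p₂ * K p₂ p₀) * h2 p₁ p₂
      + (Q p₀ p₁ * Q p₁ p₀ * Q p₁ p₂ * Q p₂ p₁) * h2 p₀ p₂
  exact quad_key _ _ _ _ hsum hprod
end

section
/- Let Λ be a set with |Λ| ≥ 4, F a field, and K, Q : Λ² → F determinantally equivalent functions of class D. Let p = (p₀,p₁,p₂,p₀) be a 3-cycle of distinct vertices that belongs only to Case 1 (i.e., K[p]=Q[p], K'[p]=Q'[p], and K[p] ≠ K'[p]). Then K[p] = 0 if and only if there exists an index i such that K(p_{i−1},p_i) = 0 = Q(p_{i−1},p_i) while K(p_i,p_{i−1}) ≠ 0 and Q(p_i,p_{i−1}) ≠ 0. -/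
lemma diag_eq {Λ F : Type*} [Field F] {K Q : Λ → Λ → F} (hKQ : DetEquiv K Q)
    (x : Λ) : K x x = Q x x := by
  have h := hKQ 1 ![x]
  simpa [Matrix.det_fin_one] using h

lemma prod_eq {Λ F : Type*} [Field F] {K Q : Λ → Λ → F} (hKQ : DetEquiv K Q)
    (x y : Λ) : K x y * K y x = Q x y * Q y x := by
  have h := hKQ 2 ![x, y]
  simp [Matrix.det_fin_two] at h
  have hx := diag_eq hKQ x
  have hy := diag_eq hKQ y
  rw [hx, hy] at h
  linear_combination -h

theorem stmt10 {Λ F : Type*} [Field F] (hcard : 4 ≤ Cardinal.mk Λ)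
    (K Q : Λ → Λ → F) (hKQ : DetEquiv K Q) (hK : ClassD K) (hQ : ClassD Q)
    (p : Fin 3 → Λ) (hp : Function.Injective p)
    (hC1 : K (p 0) (p 1) * K (p 1) (p 2) * K (p 2) (p 0) =
            Q (p 0) (p 1) * Q (p 1) (p 2) * Q (p 2) (p 0))
    (hC1' : K (p 1) (p 0) * K (p 2) (p 1) * K (p 0) (p 2) =
            Q (p 1) (p 0) * Q (p 2) (p 1) * Q (p 0) (p 2))
    (honly : K (p 0) (p 1) * K (p 1) (p 2) * K (p 2) (p 0) ≠
            K (p 1) (p 0) * K (p 2) (p 1) * K (p 0) (p 2)) :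
    K (p 0) (p 1) * K (p 1) (p 2) * K (p 2) (p 0) = 0 ↔
      ∃ i : Fin 3, K (p (i - 1)) (p i) = 0 ∧ Q (p (i - 1)) (p i) = 0 ∧
        K (p i) (p (i - 1)) ≠ 0 ∧ Q (p i) (p (i - 1)) ≠ 0 := by
  constructor
  · intro h0
    -- reversed products nonzero
    have hrev : K (p 1) (p 0) * K (p 2) (p 1) * K (p 0) (p 2) ≠ 0 := by
      intro h; exact honly (h0.trans h.symm)
    have ha' : K (p 1) (p 0) ≠ 0 := fun h => hrev (by rw [h]; ring)
    have hb' : K (p 2) (p 1) ≠ 0 := fun h => hrev (by rw [h]; ring)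
    have hc' : K (p 0) (p 2) ≠ 0 := fun h => hrev (by rw [h]; ring)
    have hQrev : Q (p 1) (p 0) * Q (p 2) (p 1) * Q (p 0) (p 2) ≠ 0 :=
      hC1' ▸ hrev
    have hA' : Q (p 1) (p 0) ≠ 0 := fun h => hQrev (by rw [h]; ring)
    have hB' : Q (p 2) (p 1) ≠ 0 := fun h => hQrev (by rw [h]; ring)
    have hC' : Q (p 0) (p 2) ≠ 0 := fun h => hQrev (by rw [h]; ring)
    rcases mul_eq_zero.mp h0 with h | hc
    · rcases mul_eq_zero.mp h with ha | hb
      · refine ⟨1, ?_⟩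
        have : (1 : Fin 3) - 1 = 0 := rfl
        rw [this]
        have hA : Q (p 0) (p 1) = 0 := by
          have := prod_eq hKQ (p 0) (p 1)
          rw [ha, zero_mul] at this
          rcases mul_eq_zero.mp this.symm with h | h
          · exact h
          · exact absurd h hA'
        exact ⟨ha, hA, ha', hA'⟩
      · refine ⟨2, ?_⟩
        have : (2 : Fin 3) - 1 = 1 := rfl
        rw [this]
        have hB : Q (p 1) (p 2) = 0 := by
          have := prod_eq hKQ (p 1) (p 2)
          rw [hb, zero_mul] at this
          rcases mul_eq_zero.mp this.symm with h | h
          · exact h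
          · exact absurd h hB'
        exact ⟨hb, hB, hb', hB'⟩
    · refine ⟨0, ?_⟩
      have : (0 : Fin 3) - 1 = 2 := rfl
      rw [this]
      have hCc : Q (p 2) (p 0) = 0 := by
        have := prod_eq hKQ (p 2) (p 0)
        rw [hc, zero_mul] at this
        rcases mul_eq_zero.mp this.symm with h | h
        · exact h
        · exact absurd h hC'
      exact ⟨hc, hCc, hc', hC'⟩
  · rintro ⟨i, hKi, _, _, _⟩
    fin_cases i
    · rw [show K (p 2) (p 0) = 0 from hKi, mul_zero]
    · rw [show K (p 0) (p 1) = 0 from hKi]; ring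
    · rw [show K (p 1) (p 2) = 0 from hKi]; ring
end

section
/- Let Λ be a set with |Λ| ≥ 4, F a field, and K, Q : Λ² → F determinantally equivalent functions of class D. Let p = (p₀,p₁,p₂,p₀) be a 3-cycle of distinct vertices with K[p] = 0. Then p belongs to both Case 1 and Case 2 if and only if there exists a unique index j with K(p_{j−1},p_j) = K(p_j,p_{j−1}) = Q(p_{j−1},p_j) = Q(p_j,p_{j−1}) = 0, and all eight remaining values K(p_j,p_{j+1}), K(p_{j+1},p_j), K(p_{j+1},p_{j−1}), K(p_{j−1},p_{j+1}), Q(p_j,p_{j+1}), Q(p_{j+1},p_j), Q(p_{j+1},p_{j−1}), Q(p_{j−1},p_{j+1}) are nonzero. -/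
/-- A function of class D cannot have two zeros in a row. -/
lemma rowAux {Λ F : Type*} [Field F] {h : Λ → Λ → F} (hD : ClassD h) {x y z w : Λ}
    (hxy : x ≠ y) (hxz : x ≠ z) (hyz : y ≠ z) (hwx : w ≠ x) (hwy : w ≠ y) (hwz : w ≠ z)
    (h1 : h x y = 0) (h2 : h x z = 0) : False :=
  hD x y z w hxy hxz hwx.symm hyz hwy.symm hwz.symm (by rw [h1, h2]; ring)

/-- A function of class D cannot have two zeros in a column. -/
lemma colAux {Λ F : Type*} [Field F] {h : Λ → Λ → F} (hD : ClassD h) {x y z w : Λ}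
    (hxy : x ≠ y) (hxz : x ≠ z) (hyz : y ≠ z) (hwx : w ≠ x) (hwy : w ≠ y) (hwz : w ≠ z)
    (h1 : h y x = 0) (h2 : h z x = 0) : False :=
  hD y x w z hxy.symm hwy.symm hyz hwx.symm hxz hwz (by rw [h1, h2]; ring)

/-- Main case analysis: if `K x0 x1 = 0` and all four cyclic products vanish,
then the full zero/nonzero pattern holds at the edge `{x0, x1}`. -/
lemma caseAux {Λ F : Type*} [Field F] {K Q : Λ → Λ → F} (hK : ClassD K)
    (pair : ∀ x y, K x y * K y x = Q x y * Q y x)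
    {x0 x1 x2 w : Λ} (d01 : x0 ≠ x1) (d02 : x0 ≠ x2) (d12 : x1 ≠ x2)
    (dw0 : w ≠ x0) (dw1 : w ≠ x1) (dw2 : w ≠ x2)
    (ha : K x0 x1 = 0)
    (hKrev : K x1 x0 * K x2 x1 * K x0 x2 = 0)
    (hQf : Q x0 x1 * Q x1 x2 * Q x2 x0 = 0)
    (hQr : Q x1 x0 * Q x2 x1 * Q x0 x2 = 0) :
    K x1 x0 = 0 ∧ Q x0 x1 = 0 ∧ Q x1 x0 = 0 ∧
    K x1 x2 ≠ 0 ∧ K x2 x1 ≠ 0 ∧ K x2 x0 ≠ 0 ∧ K x0 x2 ≠ 0 ∧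
    Q x1 x2 ≠ 0 ∧ Q x2 x1 ≠ 0 ∧ Q x2 x0 ≠ 0 ∧ Q x0 x2 ≠ 0 := by
  -- no other zero in row x0 / column x1 of K
  have hc' : K x0 x2 ≠ 0 := fun h => rowAux hK d01 d02 d12 dw0 dw1 dw2 ha h
  have hb' : K x2 x1 ≠ 0 := fun h => colAux hK d01.symm d12 d02 dw1 dw0 dw2 ha h
  -- hence the reversed product forces K x1 x0 = 0
  have ha' : K x1 x0 = 0 := by
    rcases mul_eq_zero.mp hKrev with h | h
    · rcases mul_eq_zero.mp h with h | h
      · exact h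
      · exact absurd h hb'
    · exact absurd h hc'
  -- no other zero in row x1 / column x0 of K
  have hb : K x1 x2 ≠ 0 := fun h => rowAux hK d01.symm d12 d02 dw1 dw0 dw2 ha' h
  have hc : K x2 x0 ≠ 0 := fun h => colAux hK d01 d02 d12 dw0 dw1 dw2 ha' h
  -- transfer nonvanishing to Q via the 2×2 minors
  have hβ : Q x1 x2 ≠ 0 ∧ Q x2 x1 ≠ 0 := by
    have := pair x1 x2
    constructor <;> intro h <;> rw [h] at this <;>
      simp only [zero_mul, mul_zero] at this <;>
      exact (mul_ne_zero hb hb') this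
  have hγ : Q x2 x0 ≠ 0 ∧ Q x0 x2 ≠ 0 := by
    have := pair x2 x0
    constructor <;> intro h <;> rw [h] at this <;>
      simp only [zero_mul, mul_zero] at this <;>
      exact (mul_ne_zero hc hc') this
  -- force the Q zeros
  have hα : Q x0 x1 = 0 := by
    rcases mul_eq_zero.mp hQf with h | h
    · rcases mul_eq_zero.mp h with h | h
      · exact h
      · exact absurd h hβ.1
    · exact absurd h hγ.1
  have hα' : Q x1 x0 = 0 := by
    rcases mul_eq_zero.mp hQr with h | h
    · rcases mul_eq_zero.mp h with h | h
      · exact h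
      · exact absurd h hβ.2
    · exact absurd h hγ.2
  exact ⟨ha', hα, hα', hb, hb', hc, hc', hβ.1, hβ.2, hγ.1, hγ.2⟩

theorem stmt11 {Λ F : Type*} [Field F] (hcard : 4 ≤ Cardinal.mk Λ)
    (K Q : Λ → Λ → F) (hKQ : DetEquiv K Q) (hK : ClassD K) (hQ : ClassD Q)
    (p : Fin 3 → Λ) (hp : Function.Injective p)
    (hzero : K (p 0) (p 1) * K (p 1) (p 2) * K (p 2) (p 0) = 0) :
    ((K (p 0) (p 1) * K (p 1) (p 2) * K (p 2) (p 0) =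
        Q (p 0) (p 1) * Q (p 1) (p 2) * Q (p 2) (p 0) ∧
      K (p 1) (p 0) * K (p 2) (p 1) * K (p 0) (p 2) =
        Q (p 1) (p 0) * Q (p 2) (p 1) * Q (p 0) (p 2)) ∧
     (K (p 0) (p 1) * K (p 1) (p 2) * K (p 2) (p 0) =
        Q (p 1) (p 0) * Q (p 2) (p 1) * Q (p 0) (p 2) ∧
      K (p 1) (p 0) * K (p 2) (p 1) * K (p 0) (p 2) =
        Q (p 0) (p 1) * Q (p 1) (p 2) * Q (p 2) (p 0))) ↔
    (∃! j : Fin 3,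
      K (p (j - 1)) (p j) = 0 ∧ K (p j) (p (j - 1)) = 0 ∧
      Q (p (j - 1)) (p j) = 0 ∧ Q (p j) (p (j - 1)) = 0 ∧
      K (p j) (p (j + 1)) ≠ 0 ∧ K (p (j + 1)) (p j) ≠ 0 ∧
      K (p (j + 1)) (p (j - 1)) ≠ 0 ∧ K (p (j - 1)) (p (j + 1)) ≠ 0 ∧
      Q (p j) (p (j + 1)) ≠ 0 ∧ Q (p (j + 1)) (p j) ≠ 0 ∧
      Q (p (j + 1)) (p (j - 1)) ≠ 0 ∧ Q (p (j - 1)) (p (j + 1)) ≠ 0) := by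
  -- a fourth element
  obtain ⟨w, hw0, hw1, hw2⟩ : ∃ w : Λ, w ≠ p 0 ∧ w ≠ p 1 ∧ w ≠ p 2 := by
    by_contra h
    push_neg at h
    have hsurj : Function.Surjective (fun i : ULift (Fin 3) => ![p 0, p 1, p 2] i.down) := by
      intro a
      by_cases h0 : a = p 0
      · exact ⟨⟨0⟩, h0.symm⟩
      by_cases h1 : a = p 1
      · exact ⟨⟨1⟩, h1.symm⟩
      · exact ⟨⟨2⟩, (h a h0 h1).symm⟩
    have := Cardinal.mk_le_of_surjective hsurj
    simp [Cardinal.mk_fin] at this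
    have := hcard.trans this
    norm_num at this
  have d01 : p 0 ≠ p 1 := hp.ne (by decide)
  have d02 : p 0 ≠ p 2 := hp.ne (by decide)
  have d12 : p 1 ≠ p 2 := hp.ne (by decide)
  -- the 2×2 minor identity
  have pair : ∀ x y : Λ, K x y * K y x = Q x y * Q y x := by
    intro x y
    have h1 := hKQ 1 ![x]
    have h1y := hKQ 1 ![y]
    have h2 := hKQ 2 ![x, y]
    simp [Matrix.det_fin_one, Matrix.det_fin_two] at h1 h1y h2
    linear_combination h1 * K y y + Q x x * h1y - h2
  constructor
  · rintro ⟨⟨hc1a, hc1b⟩, hc2a, hc2b⟩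
    -- all four cyclic products vanish
    have hQf : Q (p 0) (p 1) * Q (p 1) (p 2) * Q (p 2) (p 0) = 0 := hc1a ▸ hzero
    have hQr : Q (p 1) (p 0) * Q (p 2) (p 1) * Q (p 0) (p 2) = 0 := hc2a ▸ hzero
    have hKr : K (p 1) (p 0) * K (p 2) (p 1) * K (p 0) (p 2) = 0 := by rw [hc2b]; exact hQf
    rcases mul_eq_zero.mp hzero with h | hc0
    rcases mul_eq_zero.mp h with ha0 | hb0
    · -- K (p 0) (p 1) = 0 : pattern at j = 1
      obtain ⟨z1, z2, z3, n1, n2, n3, n4, n5, n6, n7, n8⟩ :=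
        caseAux hK pair d01 d02 d12 hw0 hw1 hw2 ha0 hKr hQf hQr
      refine ⟨1, ?_, ?_⟩
      · exact ⟨ha0, z1, z2, z3, n1, n2, n3, n4, n5, n6, n7, n8⟩
      · intro j hj
        fin_cases j
        · exact absurd (show K _ _ = 0 from hj.1) n3
        · rfl
        · exact absurd (show K _ _ = 0 from hj.1) n1
    · -- K (p 1) (p 2) = 0 : pattern at j = 2
      obtain ⟨z1, z2, z3, n1, n2, n3, n4, n5, n6, n7, n8⟩ :=
        caseAux hK pair d12 d01.symm d02.symm hw1 hw2 hw0 hb0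
          (by linear_combination hKr) (by linear_combination hQf) (by linear_combination hQr)
      refine ⟨2, ?_, ?_⟩
      · exact ⟨hb0, z1, z2, z3, n1, n2, n3, n4, n5, n6, n7, n8⟩
      · intro j hj
        fin_cases j
        · exact absurd (show K _ _ = 0 from hj.1) n1
        · exact absurd (show K _ _ = 0 from hj.1) n3
        · rfl
    · -- K (p 2) (p 0) = 0 : pattern at j = 0
      obtain ⟨z1, z2, z3, n1, n2, n3, n4, n5, n6, n7, n8⟩ :=
        caseAux hK pair d02.symm d12.symm d01 hw2 hw0 hw1 hc0
          (by linear_combination hKr) (by linear_combination hQf) (by linear_combination hQr)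
      refine ⟨0, ?_, ?_⟩
      · exact ⟨hc0, z1, z2, z3, n1, n2, n3, n4, n5, n6, n7, n8⟩
      · intro j hj
        fin_cases j
        · rfl
        · exact absurd (show K _ _ = 0 from hj.1) n1
        · exact absurd (show K _ _ = 0 from hj.1) n3
  · rintro ⟨j, hj, -⟩
    fin_cases j
    · have z1 : K (p 2) (p 0) = 0 := hj.1
      have z2 : K (p 0) (p 2) = 0 := hj.2.1
      have z3 : Q (p 2) (p 0) = 0 := hj.2.2.1
      have z4 : Q (p 0) (p 2) = 0 := hj.2.2.2.1
      refine ⟨⟨?_, ?_⟩, ?_, ?_⟩ <;> simp [z1, z2, z3, z4]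
    · have z1 : K (p 0) (p 1) = 0 := hj.1
      have z2 : K (p 1) (p 0) = 0 := hj.2.1
      have z3 : Q (p 0) (p 1) = 0 := hj.2.2.1
      have z4 : Q (p 1) (p 0) = 0 := hj.2.2.2.1
      refine ⟨⟨?_, ?_⟩, ?_, ?_⟩ <;> simp [z1, z2, z3, z4]
    · have z1 : K (p 1) (p 2) = 0 := hj.1
      have z2 : K (p 2) (p 1) = 0 := hj.2.1
      have z3 : Q (p 1) (p 2) = 0 := hj.2.2.1
      have z4 : Q (p 2) (p 1) = 0 := hj.2.2.2.1
      refine ⟨⟨?_, ?_⟩, ?_, ?_⟩ <;> simp [z1, z2, z3, z4]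
end

section
/- Let Λ be a set with |Λ| ≥ 4, F a field, and K, Q : Λ² → F determinantally equivalent functions of class D. Then for all distinct x, y ∈ Λ, exactly one of the following holds: (i) K(x,y)=K(y,x)=Q(x,y)=Q(y,x)=0; (ii) all four of K(x,y), K(y,x), Q(x,y), Q(y,x) are nonzero; (iii) K(x,y)=0=Q(x,y) and K(y,x)≠0, Q(y,x)≠0; (iv) K(x,y)≠0, Q(x,y)≠0, K(y,x)=0=Q(y,x); (v) K(x,y)=0=Q(y,x) and K(y,x)≠0, Q(x,y)≠0; (vi) K(x,y)≠0, Q(y,x)≠0, K(y,x)=0=Q(x,y). -/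
section Aux
variable {Λ F : Type*} [Field F]

lemma detEquiv_diag {K Q : Λ → Λ → F} (h : DetEquiv K Q) (a : Λ) : K a a = Q a a := by
  simpa [Matrix.det_fin_one] using h 1 ![a]

lemma detEquiv_prod2 {K Q : Λ → Λ → F} (h : DetEquiv K Q) (a b : Λ) :
    K a b * K b a = Q a b * Q b a := by
  have h2 := h 2 ![a, b]
  simp only [Matrix.det_fin_two, Matrix.of_apply] at h2
  have ha := detEquiv_diag h a
  have hb := detEquiv_diag h b
  simp only [Matrix.cons_val_zero, Matrix.cons_val_one, Matrix.head_cons] at h2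
  linear_combination -h2 + ha * (K b b) + Q a a * hb

lemma detEquiv_cyc3 {K Q : Λ → Λ → F} (h : DetEquiv K Q) (a b c : Λ) :
    K a b * K b c * K c a + K a c * K b a * K c b =
    Q a b * Q b c * Q c a + Q a c * Q b a * Q c b := by
  have h3 := h 3 ![a, b, c]
  simp only [Matrix.det_fin_three, Matrix.of_apply, Matrix.cons_val_zero, Matrix.cons_val_one,
    Matrix.head_cons, Matrix.cons_val_two, Matrix.tail_cons, Matrix.head_fin_const] at h3
  have ha := detEquiv_diag h a
  have hb := detEquiv_diag h b
  have hc := detEquiv_diag h c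
  have hab := detEquiv_prod2 h a b
  have hac := detEquiv_prod2 h a c
  have hbc := detEquiv_prod2 h b c
  linear_combination h3 - (K b b * K c c) * ha - (Q a a * K c c) * hb - (Q a a * Q b b) * hc
    + Q c c * hab + Q b b * hac + Q a a * hbc
    + (K a b * K b a) * hc + (K b c * K c b) * ha + (K c a * K a c) * hb

end Aux

section Aux2
variable {Λ F : Type*} [Field F]

lemma exists_two_more (hcard : 4 ≤ Cardinal.mk Λ) (x y : Λ) :
    ∃ z w : Λ, z ≠ w ∧ z ≠ x ∧ z ≠ y ∧ w ≠ x ∧ w ≠ y := by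
  have h3 : (3 : ℕ) < Cardinal.mk Λ := by
    have : ((4 : ℕ) : Cardinal) ≤ Cardinal.mk Λ := by simpa using hcard
    rw [← Order.succ_le_iff, ← Cardinal.nat_succ]
    exact this
  obtain ⟨z, hz⟩ := Cardinal.exists_notMem_of_length_lt [x, y] (by
    have : ((2 : ℕ) : Cardinal) < Cardinal.mk Λ := lt_of_le_of_lt (by norm_num) h3
    simpa using this)
  simp only [List.mem_cons, List.not_mem_nil, or_false, not_or] at hz
  obtain ⟨w, hw⟩ := Cardinal.exists_notMem_of_length_lt [x, y, z] (by simpa using h3)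
  simp only [List.mem_cons, List.not_mem_nil, or_false, not_or] at hw
  exact ⟨z, w, fun h => hw.2.2 h.symm, hz.1, hz.2, hw.1, hw.2.1⟩

lemma detEquiv_symm {K Q : Λ → Λ → F} (h : DetEquiv K Q) : DetEquiv Q K :=
  fun n x => (h n x).symm

lemma both_zero {K Q : Λ → Λ → F} (hcard : 4 ≤ Cardinal.mk Λ)
    (hKQ : DetEquiv K Q) (hQ : ClassD Q) {x y : Λ} (hxy : x ≠ y)
    (h1 : K x y = 0) (h2 : K y x = 0) : Q x y = 0 ∧ Q y x = 0 := by
  obtain ⟨z, w, hzw, hzx, hzy, hwx, hwy⟩ := exists_two_more hcard x y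
  have hprod : Q x y * Q y x = 0 := by
    have := detEquiv_prod2 hKQ x y
    rw [h1, h2] at this; linear_combination -this
  have hcyc := detEquiv_cyc3 hKQ x y z
  rw [h1, h2] at hcyc
  simp only [zero_mul, mul_zero, zero_add, add_zero] at hcyc
  -- hcyc : 0 = Q x y * Q y z * Q z x + Q x z * Q y x * Q z y
  rcases mul_eq_zero.mp hprod with hq1 | hq2
  · refine ⟨hq1, ?_⟩
    by_contra hq2
    rw [hq1] at hcyc
    simp only [zero_mul] at hcyc
    have hxz : Q x z ≠ 0 := by
      have := hQ x y z w hxy (Ne.symm hzx) (Ne.symm hwx) (Ne.symm hzy) (Ne.symm hwy) hzw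
      rw [hq1] at this
      intro h; apply this; rw [h]; ring
    have hzy' : Q z y ≠ 0 := by
      have := hQ x y w z hxy (Ne.symm hwx) (Ne.symm hzx) (Ne.symm hwy) (Ne.symm hzy) hzw.symm
      rw [hq1] at this
      intro h; apply this; rw [h]; ring
    rw [zero_add] at hcyc
    exact (mul_ne_zero (mul_ne_zero hxz hq2) hzy') hcyc.symm
  · constructor
    · by_contra hq1
      rw [hq2] at hcyc
      simp only [mul_zero, zero_mul, add_zero] at hcyc
      -- hcyc : 0 = Q x y * Q y z * Q z x
      have hyz : Q y z ≠ 0 := by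
        have := hQ y x z w (Ne.symm hxy) (Ne.symm hzy) (Ne.symm hwy) (Ne.symm hzx) (Ne.symm hwx) hzw
        rw [hq2] at this
        intro h; apply this; rw [h]; ring
      have hzx' : Q z x ≠ 0 := by
        have := hQ y x w z (Ne.symm hxy) (Ne.symm hwy) (Ne.symm hzy) (Ne.symm hwx) (Ne.symm hzx) hzw.symm
        rw [hq2] at this
        intro h; apply this; rw [h]; ring
      exact (mul_ne_zero (mul_ne_zero hq1 hyz) hzx') hcyc.symm
    · exact hq2

end Aux2

theorem stmt12 {Λ F : Type*} [Field F] (hcard : 4 ≤ Cardinal.mk Λ)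
    (K Q : Λ → Λ → F) (hKQ : DetEquiv K Q) (hK : ClassD K) (hQ : ClassD Q)
    (x y : Λ) (hxy : x ≠ y) :
    ∃! k : Fin 6,
      ![K x y = 0 ∧ K y x = 0 ∧ Q x y = 0 ∧ Q y x = 0,
        K x y ≠ 0 ∧ K y x ≠ 0 ∧ Q x y ≠ 0 ∧ Q y x ≠ 0,
        K x y = 0 ∧ Q x y = 0 ∧ K y x ≠ 0 ∧ Q y x ≠ 0,
        K x y ≠ 0 ∧ Q x y ≠ 0 ∧ K y x = 0 ∧ Q y x = 0,
        K x y = 0 ∧ Q y x = 0 ∧ K y x ≠ 0 ∧ Q x y ≠ 0,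
        K x y ≠ 0 ∧ Q y x ≠ 0 ∧ K y x = 0 ∧ Q x y = 0] k := by
  classical
  have hprod : K x y * K y x = Q x y * Q y x := detEquiv_prod2 hKQ x y
  have hKtoQ : K x y = 0 → K y x = 0 → Q x y = 0 ∧ Q y x = 0 :=
    fun h1 h2 => both_zero hcard hKQ hQ hxy h1 h2
  have hQtoK : Q x y = 0 → Q y x = 0 → K x y = 0 ∧ K y x = 0 :=
    fun h1 h2 => both_zero hcard (detEquiv_symm hKQ) hK hxy h1 h2
  by_cases hk1 : K x y = 0 <;> by_cases hk2 : K y x = 0 <;>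
    by_cases hq1 : Q x y = 0 <;> by_cases hq2 : Q y x = 0
  -- enumerate 16 cases
  · exact ⟨0, ⟨hk1, hk2, hq1, hq2⟩, by intro j hj; fin_cases j <;> first | rfl | decide | (obtain ⟨h1, h2, h3, h4⟩ := hj; simp_all)⟩
  · exact absurd (hKtoQ hk1 hk2).2 hq2
  · exact absurd (hKtoQ hk1 hk2).1 hq1
  · exact absurd (hKtoQ hk1 hk2).1 hq1
  · exact absurd (hQtoK hq1 hq2).2 hk2
  · exact ⟨2, ⟨hk1, hq1, hk2, hq2⟩, by intro j hj; fin_cases j <;> first | rfl | decide | (obtain ⟨h1, h2, h3, h4⟩ := hj; simp_all)⟩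
  · exact ⟨4, ⟨hk1, hq2, hk2, hq1⟩, by intro j hj; fin_cases j <;> first | rfl | decide | (obtain ⟨h1, h2, h3, h4⟩ := hj; simp_all)⟩
  · exact absurd hprod (by rw [hk1, zero_mul]; exact fun h => mul_ne_zero hq1 hq2 h.symm)
  · exact absurd (hQtoK hq1 hq2).1 hk1
  · exact ⟨5, ⟨hk1, hq2, hk2, hq1⟩, by intro j hj; fin_cases j <;> first | rfl | decide | (obtain ⟨h1, h2, h3, h4⟩ := hj; simp_all)⟩
  · exact ⟨3, ⟨hk1, hq1, hk2, hq2⟩, by intro j hj; fin_cases j <;> first | rfl | decide | (obtain ⟨h1, h2, h3, h4⟩ := hj; simp_all)⟩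
  · exact absurd hprod (by rw [hk2, mul_zero]; exact fun h => mul_ne_zero hq1 hq2 h.symm)
  · exact absurd hprod (by rw [hq1, zero_mul]; exact fun h => mul_ne_zero hk1 hk2 h)
  · exact absurd hprod (by rw [hq1, zero_mul]; exact fun h => mul_ne_zero hk1 hk2 h)
  · exact absurd hprod (by rw [hq2, mul_zero]; exact fun h => mul_ne_zero hk1 hk2 h)
  · exact ⟨1, ⟨hk1, hk2, hq1, hq2⟩, by intro j hj; fin_cases j <;> first | rfl | decide | (obtain ⟨h1, h2, h3, h4⟩ := hj; simp_all)⟩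
end

section
/- Let Λ be a set with |Λ| ≥ 5 (so an auxiliary element exists), F a field, and K, Q : Λ² → F determinantally equivalent functions of class D. Assume every 3-cycle of distinct vertices in Λ satisfies K[p] = Q[p]. Let x, y ∈ Λ be distinct with K(x,y) = 0 = K(y,x). Then for all z, w ∈ Λ \ {x,y} with z ≠ w: (Q(x,z)Q(z,y)) / (K(x,z)K(z,y)) = (Q(x,w)Q(w,y)) / (K(x,w)K(w,y)), where all denominators are nonzero. -/
/-!
The principal minors of size one and two show that `K` and `Q` agree on 2-cycles, and by
hypothesis they agree on 3-cycles. Class D forces `K` to be nonzero on every edge between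
`{x, y}` and the other points, so for `K z w ≠ 0` the two triangle relations for `x z w` and
`z w y`, together with the 2-cycle relations for `z y` and `x w`, cross-multiply to the claimed
equality. If `K z w = 0`, any fifth point `u` has `K z u ≠ 0 ≠ K u w` by class D, and the
equality passes through `u`.
-/

open Cardinal

lemma Cardinal.exists_notMem_of_length_lt_of_le {α : Type*} (l : List α) {n : ℕ}
    (hl : l.length < n) (hα : (n : Cardinal) ≤ #α) : ∃ u, u ∉ l :=
  exists_notMem_of_length_lt l ((Nat.cast_lt.mpr hl).trans_le hα)

lemma DetEquiv.mul_swap_eq {Λ F : Type*} [Field F] {K Q : Λ → Λ → F} (hKQ : DetEquiv K Q)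
    (a b : Λ) : K a b * K b a = Q a b * Q b a := by
  have ha := hKQ 1 ![a]
  have hb := hKQ 1 ![b]
  have hab := hKQ 2 ![a, b]
  simp only [Matrix.det_fin_one, Matrix.det_fin_two, Matrix.of_apply, Matrix.cons_val_zero,
    Matrix.cons_val_one] at ha hb hab
  linear_combination ha * K b b + Q a a * hb - hab

lemma ClassD.ne_zero_of_eq_zero {Λ F : Type*} [Field F] {h : Λ → Λ → F} (hD : ClassD h)
    (hΛ : 4 ≤ #Λ) {x y z : Λ} (hxy : x ≠ y) (hzx : z ≠ x) (hzy : z ≠ y) (h0 : h x y = 0) :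
    h x z ≠ 0 ∧ h z y ≠ 0 := by
  obtain ⟨w, hw⟩ := exists_notMem_of_length_lt_of_le [x, y, z] (by simp) hΛ
  simp only [List.mem_cons, List.not_mem_nil, or_false, not_or] at hw
  obtain ⟨hwx, hwy, hwz⟩ := hw
  have hxzw := hD x y z w hxy hzx.symm (Ne.symm hwx) hzy.symm (Ne.symm hwy) (Ne.symm hwz)
  have hxwz := hD x y w z hxy (Ne.symm hwx) hzx.symm (Ne.symm hwy) hzy.symm hwz
  rw [h0, zero_mul, zero_sub, neg_ne_zero] at hxzw hxwz
  exact ⟨left_ne_zero_of_mul hxzw, right_ne_zero_of_mul hxwz⟩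

lemma DetEquiv.div_eq_div_of_ne_zero {Λ F : Type*} [Field F] {K Q : Λ → Λ → F} (hKQ : DetEquiv K Q)
    (hK : ClassD K) (hΛ : 4 ≤ #Λ)
    (hcycle : ∀ a b c : Λ, a ≠ b → a ≠ c → b ≠ c →
      K a b * K b c * K c a = Q a b * Q b c * Q c a)
    {x y z w : Λ} (hxy : x ≠ y) (hxy0 : K x y = 0) (hyx0 : K y x = 0)
    (hzx : z ≠ x) (hzy : z ≠ y) (hwx : w ≠ x) (hwy : w ≠ y) (hzw : z ≠ w) (hzw0 : K z w ≠ 0) :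
    Q x z * Q z y / (K x z * K z y) = Q x w * Q w y / (K x w * K w y) := by
  obtain ⟨hKxz, hKzy⟩ := hK.ne_zero_of_eq_zero hΛ hxy hzx hzy hxy0
  obtain ⟨hKxw, hKwy⟩ := hK.ne_zero_of_eq_zero hΛ hxy hwx hwy hxy0
  obtain ⟨hKyz, -⟩ := hK.ne_zero_of_eq_zero hΛ hxy.symm hzy hzx hyx0
  obtain ⟨-, hKwx⟩ := hK.ne_zero_of_eq_zero hΛ hxy.symm hwy hwx hyx0
  have hxzw := hcycle x z w hzx.symm hwx.symm hzw
  have hzwy := hcycle z w y hzw hzy hwy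
  have hQxzw : Q x z * Q z w * Q w x ≠ 0 := hxzw ▸ mul_ne_zero (mul_ne_zero hKxz hzw0) hKwx
  have hQzwy : Q z w * Q w y * Q y z ≠ 0 := hzwy ▸ mul_ne_zero (mul_ne_zero hzw0 hKwy) hKyz
  have hQ : Q z w * Q w x * Q y z ≠ 0 := by
    simp only [ne_eq, mul_eq_zero, not_or] at hQxzw hQzwy ⊢
    exact ⟨⟨hQxzw.1.2, hQxzw.2⟩, hQzwy.2⟩
  rw [div_eq_div_iff (mul_ne_zero hKxz hKzy) (mul_ne_zero hKxw hKwy)]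
  -- multiplied by `Q z w * Q w x * Q y z`, each side becomes the product of the seven `K`-values
  apply mul_right_cancel₀ hQ
  linear_combination (-(Q z y * Q y z * (K x w * K w y))) * hxzw -
    (K x z * K z w * K w x * (K x w * K w y)) * hKQ.mul_swap_eq z y +
    (Q w y * Q z w * Q y z * (K x z * K z y)) * hKQ.mul_swap_eq x w +
    (K x z * K z y * K x w * K w x) * hzwy

theorem stmt13_general {Λ F : Type*} [Field F] (hcard : 5 ≤ Cardinal.mk Λ)
    (K Q : Λ → Λ → F) (hKQ : DetEquiv K Q) (hK : ClassD K)
    (hcase1 : ∀ a b c : Λ, a ≠ b → a ≠ c → b ≠ c →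
      K a b * K b c * K c a = Q a b * Q b c * Q c a)
    (x y : Λ) (hxy : x ≠ y) (hxy0 : K x y = 0) (hyx0 : K y x = 0) :
    ∀ z w : Λ, z ≠ x → z ≠ y → w ≠ x → w ≠ y → z ≠ w →
      (K x z ≠ 0 ∧ K z y ≠ 0 ∧ K x w ≠ 0 ∧ K w y ≠ 0) ∧
      Q x z * Q z y / (K x z * K z y) = Q x w * Q w y / (K x w * K w y) := by
  intro z w hzx hzy hwx hwy hzw
  have hΛ : 4 ≤ #Λ := le_trans (by norm_num) hcard
  refine ⟨?_, ?_⟩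
  · obtain ⟨hKxz, hKzy⟩ := hK.ne_zero_of_eq_zero hΛ hxy hzx hzy hxy0
    obtain ⟨hKxw, hKwy⟩ := hK.ne_zero_of_eq_zero hΛ hxy hwx hwy hxy0
    exact ⟨hKxz, hKzy, hKxw, hKwy⟩
  by_cases hzw0 : K z w = 0
  · obtain ⟨u, hu⟩ := exists_notMem_of_length_lt_of_le [x, y, z, w] (by simp) hcard
    simp only [List.mem_cons, List.not_mem_nil, or_false, not_or] at hu
    obtain ⟨hux, huy, huz, huw⟩ := hu
    obtain ⟨hKzu, hKuw⟩ := hK.ne_zero_of_eq_zero hΛ hzw huz huw hzw0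
    calc Q x z * Q z y / (K x z * K z y) = Q x u * Q u y / (K x u * K u y) :=
          hKQ.div_eq_div_of_ne_zero hK hΛ hcase1 hxy hxy0 hyx0 hzx hzy hux huy (Ne.symm huz) hKzu
      _ = Q x w * Q w y / (K x w * K w y) :=
          hKQ.div_eq_div_of_ne_zero hK hΛ hcase1 hxy hxy0 hyx0 hux huy hwx hwy huw hKuw
  · exact hKQ.div_eq_div_of_ne_zero hK hΛ hcase1 hxy hxy0 hyx0 hzx hzy hwx hwy hzw hzw0

theorem stmt13 {Λ F : Type*} [Field F] (hcard : 5 ≤ Cardinal.mk Λ)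
    (K Q : Λ → Λ → F) (hKQ : DetEquiv K Q) (hK : ClassD K) (hQ : ClassD Q)
    (hcase1 : ∀ a b c : Λ, a ≠ b → a ≠ c → b ≠ c →
      K a b * K b c * K c a = Q a b * Q b c * Q c a)
    (x y : Λ) (hxy : x ≠ y) (hxy0 : K x y = 0) (hyx0 : K y x = 0) :
    ∀ z w : Λ, z ≠ x → z ≠ y → w ≠ x → w ≠ y → z ≠ w →
      (K x z ≠ 0 ∧ K z y ≠ 0 ∧ K x w ≠ 0 ∧ K w y ≠ 0) ∧
      Q x z * Q z y / (K x z * K z y) = Q x w * Q w y / (K x w * K w y) :=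
  stmt13_general hcard K Q hKQ hK hcase1 x y hxy hxy0 hyx0
end

section
/- Let F be a field, M = {1,2,3,4}, and K, Q : M² → F determinantally equivalent functions. Let q⁽¹⁾=(1,2,3,4,1), q⁽²⁾=(1,2,4,3,1), q⁽³⁾=(1,3,2,4,1) be the three 4-cycles on M. Then K[q⁽¹⁾]+K'[q⁽¹⁾]+K[q⁽²⁾]+K'[q⁽²⁾]+K[q⁽³⁾]+K'[q⁽³⁾] = Q[q⁽¹⁾]+Q'[q⁽¹⁾]+Q[q⁽²⁾]+Q'[q⁽²⁾]+Q[q⁽³⁾]+Q'[q⁽³⁾]. -/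
section

open Matrix

variable {Λ F : Type*} [Field F]

def threeCycleSum (h : Λ → Λ → F) (a b c : Λ) : F :=
  h a b * h b c * h c a + h a c * h c b * h b a

def fourCycleSum (h : Λ → Λ → F) (a b c d : Λ) : F :=
  h a b * h b c * h c d * h d a + h b a * h c b * h d c * h a d +
    h a b * h b d * h d c * h c a + h b a * h d b * h c d * h a c +
    h a c * h c b * h b d * h d a + h c a * h b c * h d b * h a d

lemma det_fin_two_of_apply (h : Λ → Λ → F) (a b : Λ) :
    det (of fun i j => h (![a, b] i) (![a, b] j)) = h a a * h b b - h a b * h b a := by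
  simp [det_fin_two]

lemma det_fin_three_of_apply (h : Λ → Λ → F) (a b c : Λ) :
    det (of fun i j => h (![a, b, c] i) (![a, b, c] j)) =
      h a a * h b b * h c c - h a a * (h b c * h c b) - h b b * (h a c * h c a)
        - h c c * (h a b * h b a) + threeCycleSum h a b c := by
  simp [det_fin_three, threeCycleSum]; ring

lemma det_fin_four_of_apply (h : Λ → Λ → F) (a b c d : Λ) :
    det (of fun i j => h (![a, b, c, d] i) (![a, b, c, d] j)) =
      h a a * h b b * h c c * h d d
        - h c c * h d d * (h a b * h b a) - h b b * h d d * (h a c * h c a)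
        - h b b * h c c * (h a d * h d a) - h a a * h d d * (h b c * h c b)
        - h a a * h c c * (h b d * h d b) - h a a * h b b * (h c d * h d c)
        + (h a b * h b a) * (h c d * h d c) + (h a c * h c a) * (h b d * h d b)
        + (h a d * h d a) * (h b c * h c b)
        + h d d * threeCycleSum h a b c + h c c * threeCycleSum h a b d
        + h b b * threeCycleSum h a c d + h a a * threeCycleSum h b c d
        - fourCycleSum h a b c d := by
  simp [det_succ_row_zero, Fin.sum_univ_succ, Fin.succAbove, threeCycleSum, fourCycleSum]
  ring

namespace DetEquiv

variable {K Q : Λ → Λ → F}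

lemma apply_self_eq (hKQ : DetEquiv K Q) (a : Λ) : K a a = Q a a := by
  simpa [det_fin_one] using hKQ 1 ![a]

lemma mul_apply_swap_eq (hKQ : DetEquiv K Q) (a b : Λ) : K a b * K b a = Q a b * Q b a := by
  have h := hKQ 2 ![a, b]
  rw [det_fin_two_of_apply, det_fin_two_of_apply, hKQ.apply_self_eq, hKQ.apply_self_eq] at h
  linear_combination -h

lemma threeCycleSum_eq (hKQ : DetEquiv K Q) (a b c : Λ) :
    threeCycleSum K a b c = threeCycleSum Q a b c := by
  have h := hKQ 3 ![a, b, c]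
  simp only [det_fin_three_of_apply, hKQ.apply_self_eq, hKQ.mul_apply_swap_eq] at h
  linear_combination h

lemma fourCycleSum_eq (hKQ : DetEquiv K Q) (a b c d : Λ) :
    fourCycleSum K a b c d = fourCycleSum Q a b c d := by
  have h := hKQ 4 ![a, b, c, d]
  simp only [det_fin_four_of_apply, hKQ.apply_self_eq, hKQ.mul_apply_swap_eq,
    hKQ.threeCycleSum_eq] at h
  linear_combination -h

end DetEquiv

end

theorem stmt15 {F : Type*} [Field F] (K Q : Fin 4 → Fin 4 → F)
    (hKQ : DetEquiv K Q) :
    K 0 1 * K 1 2 * K 2 3 * K 3 0 + K 1 0 * K 2 1 * K 3 2 * K 0 3 +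
      K 0 1 * K 1 3 * K 3 2 * K 2 0 + K 1 0 * K 3 1 * K 2 3 * K 0 2 +
      K 0 2 * K 2 1 * K 1 3 * K 3 0 + K 2 0 * K 1 2 * K 3 1 * K 0 3 =
    Q 0 1 * Q 1 2 * Q 2 3 * Q 3 0 + Q 1 0 * Q 2 1 * Q 3 2 * Q 0 3 +
      Q 0 1 * Q 1 3 * Q 3 2 * Q 2 0 + Q 1 0 * Q 3 1 * Q 2 3 * Q 0 2 +
      Q 0 2 * Q 2 1 * Q 1 3 * Q 3 0 + Q 2 0 * Q 1 2 * Q 3 1 * Q 0 3 :=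
  hKQ.fourCycleSum_eq 0 1 2 3
end
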